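/- Let (P, ♭, L, O) be an outer-presheaf structure and let k be a hyper-element of ♭*O. Then the family h defined by h_V := k_V for all V ∈ P is a hyper-element of O that is a translation of k (i.e., h_{♭V} = k_V for all V), and it is the largest translation: every hyper-element h' of O with h'_{♭V} = k_V for all V satisfies h'_V ≤ h_V for all V ∈ P. -/

import Mathlib

/-!
A hyper-element `h` of `O` is antitone, because `h V ≤ δ(h V)_{V'} ≤ h V'` for `V' ≤ V`; hence any
translation `h'` of `k` satisfies `h' V ≤ h' (♭V) = k V`. That `k` is itself a hyper-element of `O`
follows from `O (♭V') ⊆ O V'`: daseinizing at `V'` infimizes over more elements than at `♭V'`.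
-/

universe u v

/-- The daseinization of `x ∈ L` at `V ∈ P`: the infimum of the elements of `O V` above `x`. -/
def dasein {P : Type u} {L : Type v} [CompleteLattice L]
    (O : P → Set L) (x : L) (V : P) : L :=
  sInf {y | y ∈ O V ∧ x ≤ y}

section Daseinization

variable {P : Type*} {L : Type*} [CompleteLattice L] {O : P → Set L}

theorem le_dasein (O : P → Set L) (x : L) (V : P) : x ≤ dasein O x V :=
  le_sInf fun _ hy => hy.2

theorem dasein_le_dasein_of_subset {x : L} {V V' : P} (hO : O V ⊆ O V') :
    dasein O x V' ≤ dasein O x V :=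
  sInf_le_sInf fun _ hy => ⟨hO hy.1, hy.2⟩

theorem antitone_of_dasein_le [Preorder P] {h : P → L}
    (hh : ∀ ⦃V' V : P⦄, V' ≤ V → dasein O (h V) V' ≤ h V') : Antitone h :=
  fun V' _ hle => (le_dasein O _ V').trans (hh hle)

end Daseinization

theorem max_translation_of_proposition_general
    {P : Type u} [Preorder P] (b : P → P)
    (hdefl : ∀ V : P, b V ≤ V)
    {L : Type v} [CompleteLattice L] (O : P → Set L)
    (hOmono : ∀ ⦃V' V : P⦄, V' ≤ V → O V' ⊆ O V)
    (k : P → L)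
    (hk1 : ∀ V : P, k V ∈ O (b V))
    (hk2 : ∀ V : P, k (b V) = k V)
    (hk3 : ∀ ⦃V' V : P⦄, V' ≤ V → dasein O (k V) (b V') ≤ k V') :
    ((∀ V : P, k V ∈ O V) ∧ (∀ ⦃V' V : P⦄, V' ≤ V → dasein O (k V) V' ≤ k V')) ∧
    (∀ V : P, k (b V) = k V) ∧
    (∀ h' : P → L, (∀ V : P, h' V ∈ O V) →
      (∀ ⦃V' V : P⦄, V' ≤ V → dasein O (h' V) V' ≤ h' V') →
      (∀ V : P, h' (b V) = k V) → ∀ V : P, h' V ≤ k V) := by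
  refine ⟨⟨fun V => hOmono (hdefl V) (hk1 V), fun V' V hle => ?_⟩, hk2,
    fun h' _ hh' htrans V => ?_⟩
  · exact (dasein_le_dasein_of_subset (hOmono (hdefl V'))).trans (hk3 hle)
  · exact htrans V ▸ antitone_of_dasein_le hh' (hdefl V)

/-- for a hyper-element `k` of `♭*O`, the family `h := k` is a hyper-element
of `O` which is a translation of `k`, and it is the largest translation: every
hyper-element `h'` of `O` with `h'_{♭V} = k_V` satisfies `h'_V ≤ h_V = k_V`. -/
theorem max_translation_of_proposition
    {P : Type u} [Preorder P] (b : P → P)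
    (hmono : ∀ ⦃V' V : P⦄, V' ≤ V → b V' ≤ b V)
    (hdefl : ∀ V : P, b V ≤ V)
    (hidem : ∀ V : P, b (b V) = b V)
    {L : Type v} [CompleteLattice L] (O : P → Set L)
    (hOmono : ∀ ⦃V' V : P⦄, V' ≤ V → O V' ⊆ O V)
    (hInf : ∀ (V : P) (T : Set L), T ⊆ O V → sInf T ∈ O V)
    (hSup : ∀ (V : P) (T : Set L), T ⊆ O V → sSup T ∈ O V)
    (k : P → L)
    (hk1 : ∀ V : P, k V ∈ O (b V))
    (hk2 : ∀ V : P, k (b V) = k V)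
    (hk3 : ∀ ⦃V' V : P⦄, V' ≤ V → dasein O (k V) (b V') ≤ k V') :
    ((∀ V : P, k V ∈ O V) ∧ (∀ ⦃V' V : P⦄, V' ≤ V → dasein O (k V) V' ≤ k V')) ∧
    (∀ V : P, k (b V) = k V) ∧
    (∀ h' : P → L, (∀ V : P, h' V ∈ O V) →
      (∀ ⦃V' V : P⦄, V' ≤ V → dasein O (h' V) V' ≤ h' V') →
      (∀ V : P, h' (b V) = k V) → ∀ V : P, h' V ≤ k V) :=
  max_translation_of_proposition_general b hdefl O hOmono k hk1 hk2 hk3
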